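/- arXiv:0903.2460 — 6 statements merged into one kernel-verified Lean document; each statement's English description precedes it below -/
import Mathlib

section
/- Let U be a C^2 function on [M,∞) with U''(x)>0 for all x ≥ M, lim_{x→∞} U''(x)/(U'(x))^2 = 0, and suppose x ↦ e^{-U(x)} is integrable on [M,∞). Then ∫_x^∞ e^{-U(t)} dt is asymptotically equivalent to e^{-U(x)}/U'(x) as x → ∞. -/
open Real Filter MeasureTheory Set Topology

/-!
The tail `F x = ∫_x^∞ e^{-U}` and `G x = e^{-U x} / U' x` both tend to `0`, and
`F' = -e^{-U}`, `G' = -e^{-U} (1 + U''/U'²)`, so l'Hôpital's rule gives `F / G → 1`.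
Integrability of `e^{-U}` forces `U'` to become positive, and since `U'` is increasing it then
stays above a positive constant; this makes `U → ∞` linearly, hence `G → 0`.
-/

section TailIntegral

variable {E : Type*} [NormedAddCommGroup E] [NormedSpace ℝ E] {f : ℝ → E} {a x : ℝ}

theorem setIntegral_Ioi_eq_sub_intervalIntegral {μ : Measure ℝ} (hf : IntegrableOn f (Ioi a) μ)
    (hx : a ≤ x) : ∫ t in Ioi x, f t ∂μ = ∫ t in Ioi a, f t ∂μ - ∫ t in a..x, f t ∂μ := by
  rw [intervalIntegral.integral_of_le hx, eq_sub_iff_add_eq', ← Ioc_union_Ioi_eq_Ioi hx,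
    setIntegral_union (Ioc_disjoint_Ioi le_rfl) measurableSet_Ioi]
  · exact hf.mono_set Ioc_subset_Ioi_self
  · exact hf.mono_set (Ioi_subset_Ioi hx)

theorem tendsto_setIntegral_Ioi_atTop {μ : Measure ℝ} (hf : IntegrableOn f (Ioi a) μ) :
    Tendsto (fun x => ∫ t in Ioi x, f t ∂μ) atTop (𝓝 0) := by
  have h := (tendsto_const_nhds (x := ∫ t in Ioi a, f t ∂μ)).sub
    (intervalIntegral_tendsto_integral_Ioi a hf tendsto_id)
  rw [sub_self] at h
  refine h.congr' ?_
  filter_upwards [eventually_ge_atTop a] with x hx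
  exact (setIntegral_Ioi_eq_sub_intervalIntegral hf hx).symm

theorem hasDerivAt_setIntegral_Ioi [CompleteSpace E] (hf : IntegrableOn f (Ioi a)) (hx : a < x)
    (hcont : ContinuousAt f x) : HasDerivAt (fun y => ∫ t in Ioi y, f t) (-f x) x := by
  have hint : IntervalIntegrable f volume a x :=
    (intervalIntegrable_iff_integrableOn_Ioc_of_le hx.le).2 (hf.mono_set Ioc_subset_Ioi_self)
  have hmeas : StronglyMeasurableAtFilter f (𝓝 x) :=
    AEStronglyMeasurable.stronglyMeasurableAtFilter_of_mem hf.aestronglyMeasurable (Ioi_mem_nhds hx)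
  have hsplit := (hasDerivAt_const x (∫ t in Ioi a, f t)).sub
    (intervalIntegral.integral_hasDerivAt_right hint hmeas hcont)
  rw [zero_sub] at hsplit
  refine hsplit.congr_of_eventuallyEq ?_
  filter_upwards [Ioi_mem_nhds hx] with y hy
  exact setIntegral_Ioi_eq_sub_intervalIntegral hf hy.le

end TailIntegral

theorem not_integrableOn_Ioi_of_pos_le {f : ℝ → ℝ} {a c : ℝ} (hc : 0 < c)
    (hf : ∀ x ∈ Ioi a, c ≤ f x) : ¬IntegrableOn f (Ioi a) := by
  intro hint
  have hconst : IntegrableOn (fun _ => c) (Ioi a) := by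
    refine hint.mono' aestronglyMeasurable_const ((ae_restrict_iff' measurableSet_Ioi).2 ?_)
    exact ae_of_all _ fun x hx => by rw [norm_of_nonneg hc.le]; exact hf x hx
  rw [integrableOn_const_iff] at hconst
  rcases hconst with h | h
  · simp [hc.ne'] at h
  · simp at h

theorem tendsto_atTop_of_le_deriv {f : ℝ → ℝ} {a c : ℝ} (hf : DifferentiableOn ℝ f (Ioi a))
    (hc : 0 < c) (hderiv : ∀ x ∈ Ioi a, c ≤ deriv f x) : Tendsto f atTop atTop := by
  have hgrowth : ∀ x ≥ a + 1, c * x + (f (a + 1) - c * (a + 1)) ≤ f x := fun x hx => by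
    have := (convex_Ioi a).mul_sub_le_image_sub_of_le_deriv hf.continuousOn
      (by rwa [interior_Ioi]) (by rwa [interior_Ioi]) (a + 1) (by simp) x
      (lt_of_lt_of_le (by simp) hx) hx
    linarith
  exact tendsto_atTop_mono' _ (eventually_atTop.2 ⟨a + 1, hgrowth⟩)
    (tendsto_atTop_add_const_right _ _ (tendsto_id.const_mul_atTop hc))

section Potential

variable {U : ℝ → ℝ} {a : ℝ}

theorem exists_deriv_pos_of_integrableOn_exp_neg (hU : DifferentiableOn ℝ U (Ioi a))
    (hint : IntegrableOn (fun x => exp (-U x)) (Ioi a)) : ∃ x > a, 0 < deriv U x := by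
  by_contra! hnonpos
  have hanti : AntitoneOn U (Ioi a) :=
    antitoneOn_of_deriv_nonpos (convex_Ioi a) hU.continuousOn (by rwa [interior_Ioi])
      (by rwa [interior_Ioi])
  refine not_integrableOn_Ioi_of_pos_le (exp_pos (-U (a + 1))) (fun x hx => ?_)
    (hint.mono_set (Ioi_subset_Ioi (lt_add_one a).le))
  exact exp_le_exp.2 (neg_le_neg (hanti (by simp) ((lt_add_one a).trans hx) hx.le))

theorem tendsto_exp_neg_div_deriv_atTop {c : ℝ} (hU : DifferentiableOn ℝ U (Ioi a)) (hc : 0 < c)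
    (hderiv : ∀ x ∈ Ioi a, c ≤ deriv U x) :
    Tendsto (fun x => exp (-U x) / deriv U x) atTop (𝓝 0) := by
  have hexp : Tendsto (fun x => exp (-U x)) atTop (𝓝 0) :=
    tendsto_exp_atBot.comp (tendsto_neg_atTop_atBot.comp (tendsto_atTop_of_le_deriv hU hc hderiv))
  refine tendsto_of_tendsto_of_tendsto_of_le_of_le' tendsto_const_nhds
    (by simpa using hexp.div_const c) ?_ ?_ <;>
    filter_upwards [eventually_gt_atTop a] with x hx
  · exact div_nonneg (exp_pos _).le (hc.trans_le (hderiv x hx)).le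
  · exact div_le_div_of_nonneg_left (exp_pos _).le hc (hderiv x hx)

theorem hasDerivAt_exp_neg_div_deriv {x : ℝ} (hU : DifferentiableAt ℝ U x)
    (hU' : DifferentiableAt ℝ (deriv U) x) (hne : deriv U x ≠ 0) :
    HasDerivAt (fun y => exp (-U y) / deriv U y)
      (-(exp (-U x) * (1 + deriv (deriv U) x / deriv U x ^ 2))) x := by
  have hexp : HasDerivAt (fun y => exp (-U y)) (exp (-U x) * -deriv U x) x :=
    hU.hasDerivAt.neg.exp
  refine (hexp.fun_div hU'.hasDerivAt hne).congr_deriv ?_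
  have hsq : deriv U x ^ 2 ≠ 0 := pow_ne_zero 2 hne
  rw [eq_comm, eq_div_iff hsq, neg_mul, mul_assoc, add_mul, div_mul_cancel₀ _ hsq]
  ring

end Potential

theorem laplace_tail_equivalence_general (M : ℝ) (U : ℝ → ℝ)
    (hU : ContDiffOn ℝ 2 U (Set.Ici M))
    (hU'' : ∀ x ∈ Set.Ici M, 0 < deriv (deriv U) x)
    (hlim : Tendsto (fun x => deriv (deriv U) x / (deriv U x) ^ 2) atTop (nhds 0))
    (hint : IntegrableOn (fun x => Real.exp (-U x)) (Set.Ici M)) :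
    Tendsto (fun x => (∫ t in Set.Ici x, Real.exp (-U t)) / (Real.exp (-U x) / deriv U x))
      atTop (nhds 1) := by
  have hdU : DifferentiableOn ℝ U (Ioi M) :=
    (hU.differentiableOn (by norm_num)).mono Ioi_subset_Ici_self
  have hddU : DifferentiableOn ℝ (deriv U) (Ioi M) :=
    ((hU.mono Ioi_subset_Ici_self).deriv_of_isOpen (m := 1) isOpen_Ioi
      (by norm_num)).differentiableOn one_ne_zero
  have hint' := hint.mono_set Ioi_subset_Ici_self
  have hmono : StrictMonoOn (deriv U) (Ioi M) :=
    strictMonoOn_of_deriv_pos (convex_Ioi M) hddU.continuousOn fun x hx =>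
      hU'' x (Ioi_subset_Ici_self (interior_subset hx))
  obtain ⟨x₀, hx₀M, hx₀⟩ := exists_deriv_pos_of_integrableOn_exp_neg hdU hint'
  have hsub : Ioi x₀ ⊆ Ioi M := Ioi_subset_Ioi hx₀M.le
  have hderiv : ∀ x ∈ Ioi x₀, deriv U x₀ ≤ deriv U x := fun x hx =>
    (hmono hx₀M (hsub hx) hx).le
  simp_rw [integral_Ici_eq_integral_Ioi]
  refine HasDerivAt.lhopital_zero_atTop_on_Ioi (a := x₀)
    (fun x hx => hasDerivAt_setIntegral_Ioi hint' (hsub hx) ?_)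
    (fun x hx => hasDerivAt_exp_neg_div_deriv (hdU.differentiableAt (Ioi_mem_nhds (hsub hx)))
      (hddU.differentiableAt (Ioi_mem_nhds (hsub hx))) (hx₀.trans_le (hderiv x hx)).ne')
    (fun x hx => ?_) (tendsto_setIntegral_Ioi_atTop hint')
    (tendsto_exp_neg_div_deriv_atTop (hdU.mono hsub) hx₀ hderiv) ?_
  · exact (hdU.continuousOn.neg.rexp).continuousAt (Ioi_mem_nhds (hsub hx))
  · have hr : 0 ≤ deriv (deriv U) x / deriv U x ^ 2 :=
      div_nonneg (hU'' x (Ioi_subset_Ici_self (hsub hx))).le (sq_nonneg _)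
    exact neg_ne_zero.2 (mul_pos (exp_pos _) (by linarith)).ne'
  · have hone := (tendsto_const_nhds (x := (1 : ℝ)).add hlim).inv₀ (by norm_num)
    rw [add_zero, inv_one] at hone
    refine hone.congr fun x => ?_
    rw [neg_div_neg_eq, div_mul_cancel_left₀ (exp_pos _).ne']

theorem laplace_tail_equivalence (M : ℝ) (hM : 0 < M) (U : ℝ → ℝ)
    (hU : ContDiffOn ℝ 2 U (Set.Ici M))
    (hU'' : ∀ x ∈ Set.Ici M, 0 < deriv (deriv U) x)
    (hlim : Tendsto (fun x => deriv (deriv U) x / (deriv U x) ^ 2) atTop (nhds 0))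
    (hint : IntegrableOn (fun x => Real.exp (-U x)) (Set.Ici M)) :
    Tendsto (fun x => (∫ t in Set.Ici x, Real.exp (-U t)) / (Real.exp (-U x) / deriv U x))
      atTop (nhds 1) :=
  laplace_tail_equivalence_general M U hU hU'' hlim hint
end

section
/- Let V : ℝ → ℝ be a smooth even double-well potential with V'(a)=0 and a > 0, and let α > 0, m > 0. Define Λ_m(y) = V(y + x_m) − V(y − x_m) + 2α(x_m − m)y, where x_m > 0 satisfies V'(x_m) + α(x_m − m) = 0. If V'' is convex (so that V^{(3)} is nondecreasing), then Λ_m(y) ≥ 0 for all y ≥ 0. -/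
open Set

lemma conv_even_mono {f : ℝ → ℝ} (hf : ConvexOn ℝ Set.univ f)
    (he : ∀ x, f (-x) = f x) {u v : ℝ} (h : |v| ≤ u) : f v ≤ f u := by
  rcases eq_or_lt_of_le ((abs_nonneg v).trans h) with hu | hu
  · have hv0 : v = 0 := abs_eq_zero.mp (le_antisymm (h.trans hu.symm.le) (abs_nonneg v))
    rw [hv0, ← hu]
  · obtain ⟨h1, h2⟩ := abs_le.mp h
    set t := (u + v) / (2 * u) with ht_def
    set s := (u - v) / (2 * u) with hs_def
    have ht : 0 ≤ t := div_nonneg (by linarith) (by linarith)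
    have hs : 0 ≤ s := div_nonneg (by linarith) (by linarith)
    have hts : t + s = 1 := by
      rw [ht_def, hs_def, ← add_div, div_eq_one_iff_eq (ne_of_gt (by linarith))]
      ring
    have hv : t • u + s • (-u) = v := by
      simp only [smul_eq_mul, ht_def, hs_def]
      field_simp
      ring
    have key := hf.2 (mem_univ u) (mem_univ (-u)) ht hs hts
    rw [hv, he] at key
    simp only [smul_eq_mul] at key
    have hsum : t * f u + s * f u = f u := by rw [← add_mul, hts, one_mul]
    linarith

lemma deriv_odd_of_even {V : ℝ → ℝ} (hV : Differentiable ℝ V)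
    (hVeven : ∀ x, V (-x) = V x) : ∀ x, deriv V (-x) = -deriv V x := by
  intro x
  have : deriv (fun x => V (-x)) x = deriv V x := by
    congr 1
    funext z
    exact hVeven z
  rw [deriv_comp_neg] at this
  linarith

theorem Lambda_nonneg (V : ℝ → ℝ) (hV : ContDiff ℝ (⊤ : ℕ∞) V)
    (hVeven : ∀ x, V (-x) = V x)
    (a : ℝ) (ha : 0 < a) (hVa : deriv V a = 0)
    (α m xm : ℝ) (hα : 0 < α) (hm : 0 < m) (hxm : 0 < xm)
    (hcrit : deriv V xm + α * (xm - m) = 0)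
    (hconv : ConvexOn ℝ Set.univ (fun x => deriv (deriv V) x)) :
    ∀ y ≥ (0 : ℝ), 0 ≤ V (y + xm) - V (y - xm) + 2 * α * (xm - m) * y := by
  have hV1 : Differentiable ℝ V := hV.differentiable (by simp)
  have hVi : ContDiff ℝ ((⊤ : ℕ∞) : WithTop ℕ∞) V := hV.of_le (by simp)
  have hVd : ContDiff ℝ ((⊤ : ℕ∞) : WithTop ℕ∞) (deriv V) := (contDiff_infty_iff_deriv.mp hVi).2
  have hV2 : Differentiable ℝ (deriv V) := hVd.differentiable (by simp)
  -- deriv V is odd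
  have hodd : ∀ x, deriv V (-x) = -deriv V x := deriv_odd_of_even hV1 hVeven
  -- deriv (deriv V) is even
  have heven2 : ∀ x, deriv (deriv V) (-x) = deriv (deriv V) x := by
    intro x
    have h1 : deriv (fun z => deriv V (-z)) x = deriv (fun z => -deriv V z) x := by
      congr 1
      funext z
      exact hodd z
    rw [deriv_comp_neg, deriv.fun_neg] at h1
    linarith
  set g : ℝ → ℝ := fun y => V (y + xm) - V (y - xm) + 2 * α * (xm - m) * y with hg_def
  set g' : ℝ → ℝ := fun y => deriv V (y + xm) - deriv V (y - xm) + 2 * α * (xm - m)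
    with hg'_def
  have hder : ∀ y, HasDerivAt g (g' y) y := by
    intro y
    have h1 : HasDerivAt (fun z => V (z + xm)) (deriv V (y + xm)) y :=
      ((hV1 (y + xm)).hasDerivAt).comp_add_const y xm
    have h2 : HasDerivAt (fun z => V (z - xm)) (deriv V (y - xm)) y :=
      ((hV1 (y - xm)).hasDerivAt).comp_sub_const y xm
    have h3 : HasDerivAt (fun z => 2 * α * (xm - m) * z) (2 * α * (xm - m)) y := by
      simpa using (hasDerivAt_id y).const_mul (2 * α * (xm - m))
    exact (h1.sub h2).add h3
  have hder' : ∀ y, HasDerivAt g' (deriv (deriv V) (y + xm) - deriv (deriv V) (y - xm)) y := by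
    intro y
    have h1 : HasDerivAt (fun z => deriv V (z + xm)) (deriv (deriv V) (y + xm)) y :=
      ((hV2 (y + xm)).hasDerivAt).comp_add_const y xm
    have h2 : HasDerivAt (fun z => deriv V (z - xm)) (deriv (deriv V) (y - xm)) y :=
      ((hV2 (y - xm)).hasDerivAt).comp_sub_const y xm
    exact (h1.sub h2).add_const (2 * α * (xm - m))
  -- second derivative nonneg on Ici 0
  have hsec : ∀ y ∈ Set.Ici (0 : ℝ), 0 ≤ deriv (deriv V) (y + xm) - deriv (deriv V) (y - xm) := by
    intro y hy
    simp only [Set.mem_Ici] at hy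
    have habs : |y - xm| ≤ y + xm := by
      rw [abs_le]; constructor <;> linarith
    have := conv_even_mono hconv heven2 habs
    linarith
  -- g' is monotone on Ici 0
  have hg'mono : MonotoneOn g' (Set.Ici (0 : ℝ)) := by
    apply monotoneOn_of_deriv_nonneg (convex_Ici 0)
    · exact (Differentiable.continuous (fun y => (hder' y).differentiableAt)).continuousOn
    · exact fun y _ => (hder' y).differentiableAt.differentiableWithinAt
    · intro y hy
      rw [(hder' y).deriv]
      exact hsec y (interior_subset hy)
  have hg'0 : g' 0 = 0 := by
    have : deriv V (0 - xm) = -deriv V xm := by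
      rw [show (0 : ℝ) - xm = -xm by ring, hodd]
    simp only [hg'_def, zero_add, this]
    linarith
  have hg'nonneg : ∀ y ∈ Set.Ici (0 : ℝ), 0 ≤ g' y := by
    intro y hy
    have := hg'mono (Set.self_mem_Ici) hy hy
    rw [hg'0] at this
    exact this
  have hgmono : MonotoneOn g (Set.Ici (0 : ℝ)) := by
    apply monotoneOn_of_deriv_nonneg (convex_Ici 0)
    · exact (Differentiable.continuous (fun y => (hder y).differentiableAt)).continuousOn
    · exact fun y _ => (hder y).differentiableAt.differentiableWithinAt
    · intro y hy
      rw [(hder y).deriv]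
      exact hg'nonneg y (interior_subset hy)
  have hg0 : g 0 = 0 := by
    have : V (0 - xm) = V xm := by
      rw [show (0 : ℝ) - xm = -xm by ring, hVeven]
    simp only [hg_def, zero_add, this, mul_zero, add_zero]
    ring
  intro y hy
  have := hgmono (Set.self_mem_Ici) hy hy
  rw [hg0] at this
  simpa [hg_def] using this
end

section
/- Let F be an even polynomial of degree 2n with F'(0) = 0 and F^{(3)}(0) = 0, and let a > 0. Then Σ_{p=1}^{2n−1} ((−1)^p/(p−1)!) F^{(p+1)}(a) a^{p−1} = −F''(0), and Σ_{p=2}^{2n−1} ((−1)^p/(p−2)!) F^{(p+1)}(a) a^{p−1} = a·F^{(3)}(0) = 0. -/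
open Polynomial Nat

/-! Both sums are Taylor expansions around `a`, evaluated at `0`: the first one of `F''`, the
second one of `F'''` multiplied by `a`, after the shifts `p ↦ p - 1` and `p ↦ p - 2`. Since
`deg F = 2n`, both expansions are exact at the length of the sums. -/

theorem degree_iterate_derivative_lt {R : Type*} [Semiring R] {f : R[X]} {k N : ℕ}
    (hf : f.natDegree < k + N) : (derivative^[k] f).degree < N := by
  rcases eq_or_ne (derivative^[k] f) 0 with h | h
  · simp [h]
  have hk : k ≤ f.natDegree := not_lt.mp fun hlt => h (iterate_derivative_eq_zero hlt)
  rw [degree_eq_natDegree h, Nat.cast_lt]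
  have := natDegree_iterate_derivative f k
  omega

section Taylor

variable {K : Type*} [Field K] [CharZero K]

theorem eval_hasseDeriv_eq_div_factorial (k : ℕ) (f : K[X]) (r : K) :
    (hasseDeriv k f).eval r = (derivative^[k] f).eval r / k ! := by
  rw [← factorial_smul_hasseDeriv, LinearMap.smul_apply, eval_smul, nsmul_eq_mul,
    mul_div_cancel_left₀ _ (by exact_mod_cast k.factorial_ne_zero)]

theorem eval_eq_sum_range_iterate_derivative {f : K[X]} {N : ℕ} (hf : f.degree < N) (a x : K) :
    f.eval x = ∑ j ∈ Finset.range N, (derivative^[j] f).eval a / j ! * (x - a) ^ j := by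
  rcases eq_or_ne f 0 with rfl | hf0
  · simp
  have hN : (taylor a f).natDegree < N := by
    rwa [natDegree_taylor, natDegree_lt_iff_degree_lt hf0]
  rw [← taylor_eval_sub a, eval_eq_sum_range' hN]
  simp only [taylor_coeff, eval_hasseDeriv_eq_div_factorial]

theorem eval_iterate_derivative_eq_sum_range {f : K[X]} {k N : ℕ} (hf : f.natDegree < k + N)
    (a x : K) :
    (derivative^[k] f).eval x =
      ∑ j ∈ Finset.range N, (derivative^[k + j] f).eval a / j ! * (x - a) ^ j := by
  simp only [add_comm k, Function.iterate_add_apply]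
  exact eval_eq_sum_range_iterate_derivative (degree_iterate_derivative_lt hf) a x

end Taylor

theorem even_poly_derivative_sums_general (n : ℕ) (F : Polynomial ℝ)
    (hdeg : F.natDegree = 2 * n)
    (a : ℝ) :
    (∑ p ∈ Finset.Icc 1 (2 * n - 1),
        ((-1 : ℝ) ^ p / (Nat.factorial (p - 1) : ℝ)) *
          (derivative^[p + 1] F).eval a * a ^ (p - 1))
      = -((derivative^[2] F).eval 0) ∧
    (∑ p ∈ Finset.Icc 2 (2 * n - 1),
        ((-1 : ℝ) ^ p / (Nat.factorial (p - 2) : ℝ)) *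
          (derivative^[p + 1] F).eval a * a ^ (p - 1))
      = a * (derivative^[3] F).eval 0 := by
  simp only [← Finset.Ico_add_one_right_eq_Icc, Finset.sum_Ico_eq_sum_range]
  constructor
  · rw [eval_iterate_derivative_eq_sum_range (k := 2) (N := 2 * n - 1 + 1 - 1) (by omega) a,
      ← Finset.sum_neg_distrib]
    refine Finset.sum_congr rfl fun i _ => ?_
    rw [show 1 + i + 1 = 2 + i by omega, Nat.add_sub_cancel_left]
    ring
  · rw [eval_iterate_derivative_eq_sum_range (k := 3) (N := 2 * n - 1 + 1 - 2) (by omega) a,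
      Finset.mul_sum]
    refine Finset.sum_congr rfl fun i _ => ?_
    rw [show 2 + i + 1 = 3 + i by omega, show 2 + i - 1 = i + 1 by omega, Nat.add_sub_cancel_left]
    ring

theorem even_poly_derivative_sums (n : ℕ) (hn : 1 ≤ n) (F : Polynomial ℝ)
    (hdeg : F.natDegree = 2 * n)
    (heven : ∀ x : ℝ, F.eval (-x) = F.eval x)
    (hF1 : (derivative F).eval 0 = 0)
    (hF3 : (derivative^[3] F).eval 0 = 0)
    (a : ℝ) (ha : 0 < a) :
    (∑ p ∈ Finset.Icc 1 (2 * n - 1),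
        ((-1 : ℝ) ^ p / (Nat.factorial (p - 1) : ℝ)) *
          (derivative^[p + 1] F).eval a * a ^ (p - 1))
      = -((derivative^[2] F).eval 0) ∧
    (∑ p ∈ Finset.Icc 2 (2 * n - 1),
        ((-1 : ℝ) ^ p / (Nat.factorial (p - 2) : ℝ)) *
          (derivative^[p + 1] F).eval a * a ^ (p - 1))
      = a * (derivative^[3] F).eval 0 :=
  even_poly_derivative_sums_general n F hdeg a
end

section
/- Fix n ≥ 1, a > 0, α ≥ 0, and c > 0 (standing for V''(a)), and real numbers F^{(p+1)}(a) coming from an even polynomial F of degree 2n with F''(0) = α, F^{(3)}(0) = 0. Then the linear system Σ_{p=1}^{2n−1} ((−1)^p/p!) F^{(p+1)}(a) τ_p + ((α + c)/(k a^{k−1})) τ_k = V^{(3)}(a)/(4(α + c)) − (k−1)/(4a), for 1 ≤ k ≤ 2n−1, has the unique solution τ_k = k a^{k−1} (a V^{(3)}(a) − (k−1)c)/(4 a c (α + c)). -/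
/-!
With `w p = (p + 1) a ^ p` and `b p = (-1) ^ (p + 1) F^(p+2)(a) / (p + 1)!`, the system reads
`(α + c) τ p / w p + ⟪b, τ⟫ = r p`: a diagonal matrix plus a rank-one matrix, which by
Sherman–Morrison is invertible as soon as `α + c + ⟪b, w⟫ ≠ 0`. Taylor's formula for `F''`
and `F'''` around `a`, evaluated at `0`, gives `⟪b, w⟫ = -F''(0) = -α` and
`∑ p, p b p w p = a F'''(0) = 0`, so the determinant factor is `c > 0` and the solution is
explicit.
-/

open Polynomial Finset
open scoped Nat

namespace Polynomial

theorem degree_iterate_derivative_lt {R : Type*} [Semiring R] {f : R[X]} {k N : ℕ}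
    (h : f.natDegree < N + k) : (derivative^[k] f).degree < N := by
  rw [degree_lt_iff_coeff_zero]
  intro m hm
  rw [coeff_iterate_derivative, coeff_eq_zero_of_natDegree_lt (by omega), smul_zero]

variable {K : Type*} [Field K] [CharZero K]

theorem hasseDeriv_eval_eq_iterate_derivative_eval_div (f : K[X]) (k : ℕ) (a : K) :
    (hasseDeriv k f).eval a = (derivative^[k] f).eval a / k ! := by
  rw [← factorial_smul_hasseDeriv, LinearMap.smul_apply, eval_smul, nsmul_eq_mul,
    mul_div_cancel_left₀ _ (Nat.cast_ne_zero.2 k.factorial_ne_zero)]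

theorem eval_eq_sum_range_iterate_derivative {f : K[X]} {N : ℕ} (hN : f.degree < N) (a x : K) :
    f.eval x = ∑ i ∈ range N, (derivative^[i] f).eval a / i ! * (x - a) ^ i := by
  rcases eq_or_ne f 0 with rfl | hf
  · simp
  rw [← taylor_eval_sub (r := a),
    eval_eq_sum_range' (by rwa [natDegree_taylor, natDegree_lt_iff_degree_lt hf])]
  simp only [taylor_coeff, hasseDeriv_eval_eq_iterate_derivative_eval_div]

theorem sum_range_eq_neg_iterate_derivative_two_eval_zero {F : K[X]} {N : ℕ}
    (hN : F.natDegree < N + 2) (a : K) :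
    ∑ p ∈ range N, (-1) ^ (p + 1) / ((p + 1) ! : K) * (derivative^[p + 2] F).eval a *
      (((p + 1 : ℕ) : K) * a ^ p) = -(derivative^[2] F).eval 0 := by
  rw [eval_eq_sum_range_iterate_derivative (degree_iterate_derivative_lt hN) a,
    ← sum_neg_distrib]
  refine sum_congr rfl fun p _ => ?_
  rw [Function.iterate_add_apply, Nat.factorial_succ, zero_sub, neg_pow a]
  push_cast
  field_simp
  ring

theorem sum_range_mul_index_eq_iterate_derivative_three_eval_zero {F : K[X]} {N : ℕ}
    (hN : F.natDegree < N + 2) (a : K) :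
    ∑ p ∈ range N, (-1) ^ (p + 1) / ((p + 1) ! : K) * (derivative^[p + 2] F).eval a *
      (((p + 1 : ℕ) : K) * a ^ p) * p = a * (derivative^[3] F).eval 0 := by
  cases N with
  | zero =>
    rw [eval_eq_sum_range_iterate_derivative
      (degree_iterate_derivative_lt (k := 3) (N := 0) (by omega)) 0]
    simp
  | succ M =>
    rw [sum_range_succ', eval_eq_sum_range_iterate_derivative
      (degree_iterate_derivative_lt (k := 3) (N := M) (by omega)) a, mul_sum]
    simp only [Nat.cast_zero, mul_zero, add_zero]
    refine sum_congr rfl fun q _ => ?_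
    rw [show q + 1 + 2 = q + 3 from rfl, Function.iterate_add_apply, Nat.factorial_succ,
      Nat.factorial_succ, zero_sub, neg_pow a]
    have hq : (q : K) + 1 + 1 ≠ 0 := by norm_cast
    push_cast
    field_simp
    ring

end Polynomial

section RankOne

variable {K ι : Type*} [Field K] [Fintype ι]

theorem sum_mul_eq_of_eq_mul_sub_div {b w r τ : ι → K} {l s : K} (hl : l ≠ 0)
    (hτ : ∀ k, τ k = w k * (r k - s) / l) :
    ∑ p, b p * τ p = (∑ p, b p * w p * r p - s * ∑ p, b p * w p) / l := by
  simp only [hτ, mul_sum, ← sum_sub_distrib, sum_div]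
  refine sum_congr rfl fun p _ => ?_
  field_simp

theorem diagonal_add_rankOne_solve_iff {b w r τ : ι → K} {l : K} (hl : l ≠ 0)
    (hw : ∀ k, w k ≠ 0) (hd : l + ∑ p, b p * w p ≠ 0) :
    (∀ k, ∑ p, b p * τ p + l / w k * τ k = r k) ↔
      τ = fun k => w k * (r k - (∑ p, b p * w p * r p) / (l + ∑ p, b p * w p)) / l := by
  constructor
  · intro h
    set S := ∑ p, b p * τ p
    have hτ : ∀ k, τ k = w k * (r k - S) / l := fun k => by
      have := hw k
      rw [← h k]
      field_simp
      ring
    have hSeq := sum_mul_eq_of_eq_mul_sub_div (b := b) hl hτ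
    have hSval : S = (∑ p, b p * w p * r p) / (l + ∑ p, b p * w p) := by
      rw [eq_div_iff hd]
      field_simp at hSeq
      linear_combination hSeq
    rw [← hSval]
    exact funext hτ
  · rintro rfl k
    rw [sum_mul_eq_of_eq_mul_sub_div hl fun k => rfl]
    have := hw k
    field_simp
    ring

end RankOne

theorem cramer_system_unique_solution_general (n : ℕ)
    (a α c V3 : ℝ) (ha : 0 < a) (hα : 0 ≤ α) (hc : 0 < c)
    (F : Polynomial ℝ) (hdeg : F.natDegree = 2 * n)
    (hF2 : (derivative^[2] F).eval 0 = α)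
    (hF3 : (derivative^[3] F).eval 0 = 0) :
    ∀ τ : Fin (2 * n - 1) → ℝ,
      (∀ k : Fin (2 * n - 1),
        (∑ p : Fin (2 * n - 1),
            ((-1 : ℝ) ^ ((p : ℕ) + 1) / (Nat.factorial ((p : ℕ) + 1) : ℝ)) *
              (derivative^[(p : ℕ) + 2] F).eval a * τ p)
          + ((α + c) / ((((k : ℕ) + 1 : ℕ) : ℝ) * a ^ (k : ℕ))) * τ k
          = V3 / (4 * (α + c)) - ((k : ℕ) : ℝ) / (4 * a))
      ↔ τ = fun k : Fin (2 * n - 1) =>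
          (((k : ℕ) + 1 : ℕ) : ℝ) * a ^ (k : ℕ) *
            (a * V3 - ((k : ℕ) : ℝ) * c) / (4 * a * c * (α + c)) := by
  intro τ
  have hdeg' : F.natDegree < 2 * n - 1 + 2 := by omega
  have hweight := sum_range_eq_neg_iterate_derivative_two_eval_zero hdeg' a
  have hindex := sum_range_mul_index_eq_iterate_derivative_three_eval_zero hdeg' a
  rw [hF2] at hweight
  rw [hF3, mul_zero] at hindex
  rw [← Fin.sum_univ_eq_sum_range] at hweight hindex
  have hrhs : ∑ p : Fin (2 * n - 1), (-1 : ℝ) ^ ((p : ℕ) + 1) / ((p + 1 : ℕ) ! : ℝ) *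
      (derivative^[(p : ℕ) + 2] F).eval a * ((((p : ℕ) + 1 : ℕ) : ℝ) * a ^ (p : ℕ)) *
      (V3 / (4 * (α + c)) - ((p : ℕ) : ℝ) / (4 * a)) = -α * (V3 / (4 * (α + c))) := by
    simp only [mul_sub, sum_sub_distrib, ← sum_mul, mul_div_assoc', ← sum_div]
    rw [hweight, hindex]
    ring
  have hl : α + c ≠ 0 := by positivity
  have hd : α + c + -α = c := by ring
  rw [diagonal_add_rankOne_solve_iff hl (fun k => by positivity)
    (by rw [hweight, hd]; exact hc.ne'), hrhs, hweight, hd]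
  refine Eq.congr_right (funext fun k => ?_)
  field_simp
  ring

theorem cramer_system_unique_solution (n : ℕ) (hn : 1 ≤ n)
    (a α c V3 : ℝ) (ha : 0 < a) (hα : 0 ≤ α) (hc : 0 < c)
    (F : Polynomial ℝ) (hdeg : F.natDegree = 2 * n)
    (heven : ∀ x : ℝ, F.eval (-x) = F.eval x)
    (hF2 : (derivative^[2] F).eval 0 = α)
    (hF3 : (derivative^[3] F).eval 0 = 0) :
    ∀ τ : Fin (2 * n - 1) → ℝ,
      (∀ k : Fin (2 * n - 1),
        (∑ p : Fin (2 * n - 1),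
            ((-1 : ℝ) ^ ((p : ℕ) + 1) / (Nat.factorial ((p : ℕ) + 1) : ℝ)) *
              (derivative^[(p : ℕ) + 2] F).eval a * τ p)
          + ((α + c) / ((((k : ℕ) + 1 : ℕ) : ℝ) * a ^ (k : ℕ))) * τ k
          = V3 / (4 * (α + c)) - ((k : ℕ) : ℝ) / (4 * a))
      ↔ τ = fun k : Fin (2 * n - 1) =>
          (((k : ℕ) + 1 : ℕ) : ℝ) * a ^ (k : ℕ) *
            (a * V3 - ((k : ℕ) : ℝ) * c) / (4 * a * c * (α + c)) :=
  cramer_system_unique_solution_general n a α c V3 ha hα hc F hdeg hF2 hF3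
end

section
/- Let F₀ : ℝ → ℝ be an odd, nondecreasing function that is convex on ℝ₊ (so F₀'(x) ≥ 0 for x ≥ 0 when differentiable, and F₀ satisfies F₀(x) ≤ (F₀(x−y) + F₀(x+y))/2 for all y ∈ ℝ and x ≥ 0). Then for any even probability density u on ℝ and any x ≥ 0, ∫₀^x (F₀ ∗ u)(y) dy ≥ 0, where (F₀ ∗ u)(y) = ∫_ℝ F₀(y − z) u(z) dz. -/
/-! Since `u` is even, `(F₀ ∗ u)(y) = ∫ (F₀ (y - z) + F₀ (y + z)) / 2 * u z`, and for `y ≥ 0` the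
midpoint inequality bounds this below by `F₀ y * ∫ u = F₀ y ≥ 0`. So the convolution is nonnegative
on `[0, x]`, and so is its integral. -/

open MeasureTheory

theorem integral_add_comp_neg_div_two {G : Type*} [MeasurableSpace G] [AddGroup G]
    [MeasurableNeg G] {μ : Measure G} [μ.IsNegInvariant] {g : G → ℝ} (hg : Integrable g μ) :
    ∫ x, (g x + g (-x)) / 2 ∂μ = ∫ x, g x ∂μ := by
  rw [integral_div, integral_add hg hg.comp_neg, integral_neg_eq_self]
  ring

theorem le_integral_comp_sub_mul_of_le_midpoint {f u : ℝ → ℝ} {y : ℝ}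
    (hf : ∀ z, f y ≤ (f (y - z) + f (y + z)) / 2)
    (hu_nonneg : ∀ z, 0 ≤ u z) (hu_even : ∀ z, u (-z) = u z) (hu_prob : ∫ z, u z = 1)
    (hker : Integrable (fun z => f (y - z) * u z)) :
    f y ≤ ∫ z, f (y - z) * u z := by
  have hu_int : Integrable u := .of_integral_ne_zero (by simp [hu_prob])
  have hsymm : (fun z => (f (y - z) + f (y + z)) / 2 * u z) =
      fun z => (f (y - z) * u z + f (y - -z) * u (-z)) / 2 := by
    funext z
    rw [hu_even, sub_neg_eq_add]
    ring
  calc f y = ∫ z, f y * u z := by rw [integral_const_mul, hu_prob, mul_one]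
    _ ≤ ∫ z, (f (y - z) + f (y + z)) / 2 * u z := by
      refine integral_mono (hu_int.const_mul _) ?_ fun z => ?_
      · rw [hsymm]
        exact (hker.add hker.comp_neg).div_const 2
      · exact mul_le_mul_of_nonneg_right (hf z) (hu_nonneg z)
    _ = ∫ z, f (y - z) * u z := by
      rw [hsymm]
      exact integral_add_comp_neg_div_two hker

theorem Monotone.nonneg_of_odd {f : ℝ → ℝ} (hmono : Monotone f) (hodd : ∀ x, f (-x) = -f x)
    {x : ℝ} (hx : 0 ≤ x) : 0 ≤ f x := by
  have hf0 : f 0 = 0 := by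
    have h := hodd 0
    rw [neg_zero] at h
    linarith
  simpa [hf0] using hmono hx

theorem convolution_integral_nonneg_general (F₀ : ℝ → ℝ)
    (hodd : ∀ x, F₀ (-x) = -F₀ x)
    (hmono : Monotone F₀)
    (hconv : ∀ y : ℝ, ∀ x ≥ (0 : ℝ), F₀ x ≤ (F₀ (x - y) + F₀ (x + y)) / 2)
    (u : ℝ → ℝ) (hu_nonneg : ∀ x, 0 ≤ u x) (hu_even : ∀ x, u (-x) = u x)
    (hu_prob : ∫ x : ℝ, u x = 1)
    (hker : ∀ y : ℝ, Integrable (fun z => F₀ (y - z) * u z)) :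
    ∀ x ≥ (0 : ℝ), 0 ≤ ∫ y in Set.Icc (0 : ℝ) x, ∫ z : ℝ, F₀ (y - z) * u z := by
  intro x _
  refine setIntegral_nonneg measurableSet_Icc fun y hy => ?_
  exact (hmono.nonneg_of_odd hodd hy.1).trans <|
    le_integral_comp_sub_mul_of_le_midpoint (fun z => hconv z y hy.1) hu_nonneg hu_even hu_prob
      (hker y)

theorem convolution_integral_nonneg (F₀ : ℝ → ℝ)
    (hodd : ∀ x, F₀ (-x) = -F₀ x)
    (hmono : Monotone F₀)
    (hconv : ∀ y : ℝ, ∀ x ≥ (0 : ℝ), F₀ x ≤ (F₀ (x - y) + F₀ (x + y)) / 2)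
    (u : ℝ → ℝ) (hu_nonneg : ∀ x, 0 ≤ u x) (hu_even : ∀ x, u (-x) = u x)
    (hu_int : Integrable u) (hu_prob : ∫ x : ℝ, u x = 1)
    (hker : ∀ y : ℝ, Integrable (fun z => F₀ (y - z) * u z)) :
    ∀ x ≥ (0 : ℝ), 0 ≤ ∫ y in Set.Icc (0 : ℝ) x, ∫ z : ℝ, F₀ (y - z) * u z :=
  convolution_integral_nonneg_general F₀ hodd hmono hconv u hu_nonneg hu_even hu_prob hker
end

section
/- Let W_m(x) = V(x) + (α/2)x² − αmx with V smooth and e^{−(2/ε)W_m} integrable with finite second moment, and define Ψ_ε(m) = (∫ x e^{−(2/ε)W_m(x)} dx)/(∫ e^{−(2/ε)W_m(x)} dx). Then Ψ_ε is differentiable in m and Ψ_ε'(m) = (2α/ε)·Var(u_ε^{(m)}), where u_ε^{(m)}(x) = e^{−(2/ε)W_m(x)}/∫ e^{−(2/ε)W_m(y)} dy and Var denotes the variance of this probability density. -/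
open MeasureTheory
section PsiAux
open Real

lemma abs_pow_le3 (k : ℕ) (hk : k ≤ 3) (x : ℝ) : |x|^k ≤ 16 * Real.exp (x^2/2) := by
  have h1 : 1 + x^2/4 ≤ Real.exp (x^2/4) := by
    have := Real.add_one_le_exp (x^2/4); linarith
  have h2 : Real.exp (x^2/2) = Real.exp (x^2/4) * Real.exp (x^2/4) := by
    rw [← Real.exp_add]; congr 1; ring
  set e := Real.exp (x^2/4) with he
  set y := |x| with hyd
  have hy : (0:ℝ) ≤ y := abs_nonneg x
  have hy2 : y^2 = x^2 := sq_abs x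
  have hprod : (1 + x^2/4) * (1 + x^2/4) ≤ e * e :=
    mul_le_mul h1 h1 (by positivity) (Real.exp_pos _).le
  rw [h2]
  interval_cases k <;> nlinarith [sq_nonneg (y^2 - y), sq_nonneg (2*y - 1), sq_nonneg y, hy2, hprod]

lemma exponent_bound (V : ℝ → ℝ) (C₄ C₂ : ℝ) (hC₄ : 0 < C₄)
    (hgrowth : ∀ x : ℝ, C₄ * x ^ 4 - C₂ * x ^ 2 ≤ V x)
    (α ε : ℝ) (hα : 0 < α) (hε : 0 < ε) (m₀ : ℝ) :
    ∃ K : ℝ, ∀ m : ℝ, |m - m₀| < 1 → ∀ x : ℝ,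
      -(2 / ε) * (V x + α / 2 * x ^ 2 - α * m * x) ≤ K - x ^ 2 := by
  set R : ℝ := |m₀| + 1 with hR
  have hR0 : 0 ≤ R := by positivity
  set b : ℝ := C₂ + α * R / 2 + ε / 2 with hb
  refine ⟨(2/ε) * (α * R / 2 + b^2 / (4 * C₄)), fun m hm x => ?_⟩
  have hmR : |m| ≤ R := by
    calc |m| = |(m - m₀) + m₀| := by ring_nf
    _ ≤ |m - m₀| + |m₀| := abs_add_le _ _
    _ ≤ R := by rw [hR]; linarith
  have habs : |x| ≤ (1 + x^2)/2 := by
    nlinarith [sq_nonneg (|x| - 1), sq_abs x, abs_nonneg x]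
  have hmx : m * x ≤ R * ((1 + x^2)/2) := by
    calc m * x ≤ |m * x| := le_abs_self _
    _ = |m| * |x| := abs_mul _ _
    _ ≤ R * ((1 + x^2)/2) := mul_le_mul hmR habs (abs_nonneg x) hR0
  have hamx : α * (m * x) ≤ α * (R * ((1 + x^2)/2)) :=
    mul_le_mul_of_nonneg_left hmx hα.le
  have hquad : 0 ≤ C₄ * x^4 - b * x^2 + b^2/(4*C₄) := by
    have hkey : C₄ * x^4 - b * x^2 + b^2/(4*C₄) = (2*C₄*x^2 - b)^2 / (4*C₄) := by
      field_simp; ring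
    rw [hkey]; positivity
  have hW : ε/2 * x^2 - (α * R / 2 + b^2/(4*C₄)) ≤ V x + α / 2 * x ^ 2 - α * m * x := by
    have hg := hgrowth x
    nlinarith [hquad, hamx, sq_nonneg x]
  have h2e : (0:ℝ) < 2/ε := by positivity
  have := mul_le_mul_of_nonneg_left hW h2e.le
  have heq : (2/ε) * (ε/2 * x^2 - (α * R / 2 + b^2/(4*C₄)))
      = x^2 - (2/ε) * (α * R / 2 + b^2/(4*C₄)) := by
    field_simp
  rw [heq] at this
  linarith

lemma psi_aux (V : ℝ → ℝ) (hVc : Continuous V)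
    (C₄ C₂ : ℝ) (hC₄ : 0 < C₄) (hC₂ : 0 < C₂)
    (hgrowth : ∀ x : ℝ, C₄ * x ^ 4 - C₂ * x ^ 2 ≤ V x)
    (α ε : ℝ) (hα : 0 < α) (hε : 0 < ε) (m₀ : ℝ) :
    HasDerivAt (fun m => (∫ x : ℝ, x * Real.exp (-(2 / ε) * (V x + α / 2 * x ^ 2 - α * m * x)))
        / (∫ x : ℝ, Real.exp (-(2 / ε) * (V x + α / 2 * x ^ 2 - α * m * x))))
      ((2 * α / ε) * ((∫ x : ℝ, x ^ 2 * (Real.exp (-(2 / ε) * (V x + α / 2 * x ^ 2 - α * m₀ * x))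
            / (∫ y : ℝ, Real.exp (-(2 / ε) * (V y + α / 2 * y ^ 2 - α * m₀ * y)))))
        - (∫ x : ℝ, x * (Real.exp (-(2 / ε) * (V x + α / 2 * x ^ 2 - α * m₀ * x))
            / (∫ y : ℝ, Real.exp (-(2 / ε) * (V y + α / 2 * y ^ 2 - α * m₀ * y))))) ^ 2)) m₀ := by
  set E : ℝ → ℝ → ℝ := fun m x => Real.exp (-(2 / ε) * (V x + α / 2 * x ^ 2 - α * m * x)) with hE
  obtain ⟨K, hK⟩ := exponent_bound V C₄ C₂ hC₄ hgrowth α ε hα hε m₀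
  -- the dominating bound
  set bnd : ℝ → ℝ := fun x => 16 * Real.exp K * Real.exp (-(1/2) * x^2) with hbnd
  have hbnd_int : Integrable bnd := by
    exact (integrable_exp_neg_mul_sq (by norm_num : (0:ℝ) < 1/2)).const_mul _
  have hdom : ∀ k : ℕ, k ≤ 3 → ∀ m ∈ Metric.ball m₀ 1, ∀ x : ℝ,
      |x ^ k * E m x| ≤ bnd x := by
    intro k hk m hm x
    have hmb : |m - m₀| < 1 := by simpa [Real.dist_eq] using hm
    have hEx : E m x ≤ Real.exp (K - x^2) :=
      Real.exp_le_exp.2 (hK m hmb x)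
    have hE0 : 0 < E m x := Real.exp_pos _
    have h1 : |x ^ k * E m x| = |x|^k * E m x := by
      rw [abs_mul, abs_pow, abs_of_pos hE0]
    rw [h1]
    calc |x|^k * E m x ≤ (16 * Real.exp (x^2/2)) * Real.exp (K - x^2) :=
          mul_le_mul (abs_pow_le3 k hk x) hEx hE0.le (by positivity)
    _ = bnd x := by
        have harg : x^2/2 + (K - x^2) = K + (-(1/2)*x^2) := by ring
        simp only [hbnd]
        rw [mul_assoc, ← Real.exp_add, harg, Real.exp_add]
        ring
  have hEcont : ∀ m : ℝ, Continuous (fun x => E m x) := by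
    intro m; rw [hE]; fun_prop
  have hmeas : ∀ k : ℕ, ∀ m : ℝ, AEStronglyMeasurable (fun x => x ^ k * E m x) volume := by
    intro k m
    exact ((continuous_pow k).mul (hEcont m)).aestronglyMeasurable
  have hint : ∀ k : ℕ, k ≤ 3 → ∀ m ∈ Metric.ball m₀ 1, Integrable (fun x => x ^ k * E m x) := by
    intro k hk m hm
    exact Integrable.mono' hbnd_int (hmeas k m)
      (Filter.Eventually.of_forall (fun x => hdom k hk m hm x))
  have hm₀ : m₀ ∈ Metric.ball m₀ 1 := Metric.mem_ball_self one_pos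
  have hderiv : ∀ (k : ℕ) (x : ℝ) (m : ℝ),
      HasDerivAt (fun m : ℝ => x ^ k * E m x)
        (2 * α / ε * (x ^ (k+1) * E m x)) m := by
    intro k x m
    have hlin : HasDerivAt (fun m : ℝ => α * m * x) (α * x) m := by
      simpa using ((hasDerivAt_id m).const_mul α).mul_const x
    have hsub : HasDerivAt (fun m : ℝ => V x + α / 2 * x ^ 2 - α * m * x) (-(α * x)) m :=
      hlin.const_sub (V x + α / 2 * x ^ 2)
    have := ((hsub.const_mul (-(2/ε))).exp).const_mul (x ^ k)
    exact this.congr_deriv (by simp only [hE]; rw [pow_succ]; ring)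
  -- derivative of Z
  have hZint : Integrable (fun x => E m₀ x) := by
    have := hint 0 (by norm_num) m₀ hm₀
    simpa using this
  have hZ := hasDerivAt_integral_of_dominated_loc_of_deriv_le (μ := volume)
    (F := fun m x => E m x) (F' := fun m x => 2 * α / ε * (x ^ 1 * E m x))
    (bound := fun x => 2 * α / ε * bnd x) (Metric.ball_mem_nhds m₀ one_pos)
    (Filter.Eventually.of_forall (fun m => (hEcont m).aestronglyMeasurable))
    hZint
    ((continuous_const.mul ((continuous_pow 1).mul (hEcont m₀))).aestronglyMeasurable)
    (Filter.Eventually.of_forall (fun x => fun m hm => by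
      have h := hdom 1 (by norm_num) m hm x
      have hc : (0:ℝ) ≤ 2 * α / ε := by positivity
      rw [Real.norm_eq_abs, abs_mul, abs_of_nonneg hc]
      exact mul_le_mul_of_nonneg_left h hc))
    (hbnd_int.const_mul _)
    (Filter.Eventually.of_forall (fun x => fun m hm => by
      simpa using hderiv 0 x m))
  obtain ⟨hZ'int, hZderiv⟩ := hZ
  -- derivative of N
  have hNint : Integrable (fun x => x * E m₀ x) := by
    have := hint 1 (by norm_num) m₀ hm₀
    simpa using this
  have hN := hasDerivAt_integral_of_dominated_loc_of_deriv_le (μ := volume)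
    (F := fun m x => x * E m x) (F' := fun m x => 2 * α / ε * (x ^ 2 * E m x))
    (bound := fun x => 2 * α / ε * bnd x) (Metric.ball_mem_nhds m₀ one_pos)
    (Filter.Eventually.of_forall (fun m => (continuous_id.mul (hEcont m)).aestronglyMeasurable))
    hNint
    ((continuous_const.mul ((continuous_pow 2).mul (hEcont m₀))).aestronglyMeasurable)
    (Filter.Eventually.of_forall (fun x => fun m hm => by
      have h := hdom 2 (by norm_num) m hm x
      have hc : (0:ℝ) ≤ 2 * α / ε := by positivity
      rw [Real.norm_eq_abs, abs_mul, abs_of_nonneg hc]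
      exact mul_le_mul_of_nonneg_left h hc))
    (hbnd_int.const_mul _)
    (Filter.Eventually.of_forall (fun x => fun m hm => by
      simpa using hderiv 1 x m))
  obtain ⟨hN'int, hNderiv⟩ := hN
  -- positivity of Z
  have hZpos : 0 < ∫ x : ℝ, E m₀ x := integral_exp_pos hZint
  set Z₀ : ℝ := ∫ x : ℝ, E m₀ x with hZ₀
  set N₀ : ℝ := ∫ x : ℝ, x * E m₀ x with hN₀
  set S₀ : ℝ := ∫ x : ℝ, x^2 * E m₀ x with hS₀
  -- rewrite the derivative integrals
  have hZd : HasDerivAt (fun m => ∫ x : ℝ, E m x) (2 * α / ε * N₀) m₀ := by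
    refine hZderiv.congr_deriv ?_
    rw [hN₀, ← integral_const_mul]
    simp [pow_one]
  have hNd : HasDerivAt (fun m => ∫ x : ℝ, x * E m x) (2 * α / ε * S₀) m₀ := by
    refine hNderiv.congr_deriv ?_
    rw [hS₀, ← integral_const_mul]
  -- quotient rule
  have hdiv := hNd.div hZd hZpos.ne'
  refine hdiv.congr_deriv ?_
  have h1 : (∫ x : ℝ, x ^ 2 * (E m₀ x / Z₀)) = S₀ / Z₀ := by
    rw [hS₀, ← integral_div]
    congr 1; ext x; ring
  have h2 : (∫ x : ℝ, x * (E m₀ x / Z₀)) = N₀ / Z₀ := by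
    rw [hN₀, ← integral_div]
    congr 1; ext x; ring
  rw [h1, h2, ← hZ₀, ← hN₀]
  field_simp

end PsiAux

theorem Psi_deriv_is_variance (V : ℝ → ℝ) (hV : ContDiff ℝ (⊤ : ℕ∞) V)
    (C₄ C₂ : ℝ) (hC₄ : 0 < C₄) (hC₂ : 0 < C₂)
    (hgrowth : ∀ x : ℝ, C₄ * x ^ 4 - C₂ * x ^ 2 ≤ V x)
    (α ε : ℝ) (hα : 0 < α) (hε : 0 < ε) :
    letI W : ℝ → ℝ → ℝ := fun m x => V x + α / 2 * x ^ 2 - α * m * x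
    letI Z : ℝ → ℝ := fun m => ∫ x : ℝ, Real.exp (-(2 / ε) * W m x)
    letI Ψ : ℝ → ℝ := fun m => (∫ x : ℝ, x * Real.exp (-(2 / ε) * W m x)) / Z m
    letI u : ℝ → ℝ → ℝ := fun m x => Real.exp (-(2 / ε) * W m x) / Z m
    ∀ m : ℝ, HasDerivAt Ψ
      ((2 * α / ε) * ((∫ x : ℝ, x ^ 2 * u m x) - (∫ x : ℝ, x * u m x) ^ 2)) m := by
  intro m
  exact psi_aux V hV.continuous C₄ C₂ hC₄ hC₂ hgrowth α ε hα hε m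
end
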